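/- arXiv:1706.06934 — 8 statements merged into one kernel-verified Lean document; each statement's English description precedes it below -/
import Mathlib

section
/- Let 1 ≤ d ≤ n be integers and let s⁽¹⁾,…,s⁽ᵐ⁾ be independent, uniformly distributed elements of {0,1}ⁿ. Then the probability that the set S = {s⁽¹⁾,…,s⁽ᵐ⁾} is not an (n,d)-universal set is at most C(n,d)·2^d·(1 − 2^{−d})^m. In particular, for every δ ∈ (0,1), if m ≥ 2^d·(d·ln(2n) + ln(1/δ)) then S is an (n,d)-universal set with probability at least 1 − δ. -/
open MeasureTheory
open scoped ENNReal

/-!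
Union bound: the set fails to be universal only if some strictly monotone index tuple (there are
`C(n,d)` of them) and some pattern (`2^d`) are missed by all `m` samples. Restricting a uniform
`t ∈ {0,1}ⁿ` to `d` distinct coordinates splits off the remaining `n - d` coordinates as a free
factor, so a fixed pattern is hit with probability exactly `2^{-d}`, and missed by all independent
samples with probability `(1 - 2^{-d})^m`. For the second part, `C(n,d)·2^d ≤ (2n)^d` and
`1 - q ≤ e^{-q}`.
-/

def IsUniversalSet (n d : ℕ) (S : Set (Fin n → Bool)) : Prop :=
  ∀ idx : Fin d → Fin n, StrictMono idx →
    ∀ σ : Fin d → Bool, ∃ s ∈ S, ∀ j : Fin d, s (idx j) = σ j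

theorem card_strictMono_fin {α : Type*} [LinearOrder α] (d : ℕ) :
    Nat.card {f : Fin d → α // StrictMono f} = (Nat.card α).choose d := by
  let e : {f : Fin d → α // StrictMono f} ≃ (Fin d ↪o α) :=
    { toFun f := OrderEmbedding.ofStrictMono f.1 f.2
      invFun f := ⟨f, f.strictMono⟩
      left_inv _ := rfl
      right_inv _ := rfl }
  rw [Nat.card_congr (e.trans Set.powersetCard.ofFinEmbEquiv), Set.powersetCard.card]

theorem card_comp_eq_mul_card {ι κ β : Type*} {idx : κ → ι} (hidx : Function.Injective idx)
    (σ : κ → β) :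
    Nat.card {t : ι → β // t ∘ idx = σ} * Nat.card (κ → β) = Nat.card (ι → β) := by
  classical
  let C := {i // i ∉ Set.range idx}
  let e : (ι → β) ≃ (κ → β) × (C → β) :=
    (Equiv.piEquivPiSubtypeProd (· ∈ Set.range idx) fun _ => β).trans
      (Equiv.prodCongr (Equiv.arrowCongr (Equiv.ofInjective idx hidx).symm (Equiv.refl β))
        (Equiv.refl _))
  have he (t : ι → β) : (e t).1 = t ∘ idx := rfl
  have fiber : {t : ι → β // t ∘ idx = σ} ≃ (C → β) :=
    (e.subtypeEquiv fun t => by rw [he]).trans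
      ((Equiv.prodSubtypeFstEquivSubtypeProd (p := (· = σ))).trans
        (Equiv.uniqueProd _ _))
  rw [Nat.card_congr fiber, Nat.card_congr e, Nat.card_prod, mul_comm]

section Uniform

variable {ι κ β : Type*} [Fintype ι] [DecidableEq ι] [Fintype κ] [Fintype β] [Nonempty β]
  [MeasurableSpace β] [MeasurableSingletonClass β]

theorem uniformOfFintype_toMeasure_comp_eq {idx : κ → ι} (hidx : Function.Injective idx)
    (σ : κ → β) :
    (PMF.uniformOfFintype (ι → β)).toMeasure {t | t ∘ idx = σ} =
      (Nat.card (κ → β) : ℝ≥0∞)⁻¹ := by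
  classical
  have hprod := card_comp_eq_mul_card hidx σ
  have hfiber : Nat.card {t : ι → β // t ∘ idx = σ} ≠ 0 :=
    left_ne_zero_of_mul (hprod ▸ Nat.card_pos.ne')
  rw [PMF.toMeasure_uniformOfFintype_apply _ MeasurableSet.of_discrete,
    Fintype.card_eq_nat_card, Fintype.card_eq_nat_card, ← hprod, Set.coe_ofPred, Nat.cast_mul,
    ENNReal.div_eq_inv_mul, ENNReal.mul_inv (by simp) (by simp), mul_right_comm,
    ENNReal.inv_mul_cancel (by exact_mod_cast hfiber) (by simp), one_mul]

theorem measure_pi_forall_comp_ne {τ : Type*} [Fintype τ] {idx : κ → ι}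
    (hidx : Function.Injective idx) (σ : κ → β) :
    (Measure.pi fun _ : τ => (PMF.uniformOfFintype (ι → β)).toMeasure)
        {s : τ → ι → β | ∀ i, s i ∘ idx ≠ σ} =
      (1 - (Nat.card (κ → β) : ℝ≥0∞)⁻¹) ^ Fintype.card τ := by
  have hset : {s : τ → ι → β | ∀ i, s i ∘ idx ≠ σ} =
      Set.univ.pi fun _ => {t | t ∘ idx = σ}ᶜ := by
    ext s; simp
  rw [hset, Measure.pi_pi, prob_compl_eq_one_sub MeasurableSet.of_discrete,
    uniformOfFintype_toMeasure_comp_eq hidx, Finset.prod_const, Finset.card_univ]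

end Uniform

theorem setOf_not_isUniversalSet_eq (n d m : ℕ) :
    {s : Fin m → Fin n → Bool | ¬ IsUniversalSet n d (Set.range s)} =
      ⋃ (idx : {f : Fin d → Fin n // StrictMono f}) (σ : Fin d → Bool),
        {s | ∀ i, s i ∘ idx.1 ≠ σ} := by
  ext s
  simp only [IsUniversalSet, Set.mem_range, exists_exists_eq_and]
  simp [funext_iff]

theorem measure_not_isUniversalSet_le (n d m : ℕ) :
    (Measure.pi fun _ : Fin m => (PMF.uniformOfFintype (Fin n → Bool)).toMeasure)
        {s : Fin m → Fin n → Bool | ¬ IsUniversalSet n d (Set.range s)} ≤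
      (n.choose d : ℝ≥0∞) * 2 ^ d * (1 - ((2 : ℝ≥0∞) ^ d)⁻¹) ^ m := by
  classical
  rw [setOf_not_isUniversalSet_eq]
  refine (measure_iUnion_fintype_le _ _).trans ?_
  refine (Finset.sum_le_sum fun idx _ => measure_iUnion_fintype_le _ _).trans_eq ?_
  rw [Finset.sum_congr rfl fun idx _ => Finset.sum_congr rfl fun σ _ =>
    measure_pi_forall_comp_ne (τ := Fin m) idx.2.injective σ]
  simp only [Finset.sum_const, Finset.card_univ, Fintype.card_eq_nat_card, card_strictMono_fin]
  simp [mul_assoc]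

theorem pow_le_exp_mul_log {x : ℝ} (hx : 0 ≤ x) (d : ℕ) :
    x ^ d ≤ Real.exp (d * Real.log x) := by
  rcases hx.eq_or_lt with rfl | hx
  · rcases d with _ | d <;> simp
  · rw [Real.exp_nat_mul, Real.exp_log hx]

theorem one_sub_pow_le_exp {q : ℝ} (hq : q ≤ 1) (m : ℕ) :
    (1 - q) ^ m ≤ Real.exp (-(q * m)) := by
  calc (1 - q) ^ m ≤ Real.exp (-q) ^ m :=
        pow_le_pow_left₀ (by linarith) (by linarith [Real.add_one_le_exp (-q)]) m
    _ = Real.exp (-(q * m)) := by rw [← Real.exp_nat_mul]; ring_nf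

theorem pow_mul_one_sub_pow_le {x q δ : ℝ} {d m : ℕ} (hx : 0 ≤ x) (hq : q ≤ 1)
    (hδ : 0 < δ) (hm : d * Real.log x + Real.log (1 / δ) ≤ q * m) :
    x ^ d * (1 - q) ^ m ≤ δ := by
  calc x ^ d * (1 - q) ^ m ≤ Real.exp (d * Real.log x) * Real.exp (-(q * m)) :=
        mul_le_mul (pow_le_exp_mul_log hx d) (one_sub_pow_le_exp hq m)
          (pow_nonneg (by linarith) m) (Real.exp_pos _).le
    _ ≤ Real.exp (-Real.log (1 / δ)) := by rw [← Real.exp_add]; gcongr; linarith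
    _ = δ := by rw [one_div, Real.log_inv, neg_neg, Real.exp_log hδ]

theorem choose_mul_two_pow_mul_one_sub_pow_le {n d m : ℕ} {δ : ℝ} (hδ : 0 < δ)
    (hm : (2 : ℝ) ^ d * (d * Real.log (2 * n) + Real.log (1 / δ)) ≤ m) :
    (n.choose d : ℝ≥0∞) * 2 ^ d * (1 - ((2 : ℝ≥0∞) ^ d)⁻¹) ^ m ≤
      ENNReal.ofReal δ := by
  have hreal : (n.choose d : ℝ) * 2 ^ d * (1 - ((2 : ℝ) ^ d)⁻¹) ^ m ≤ δ := by
    have hq : ((2 : ℝ) ^ d)⁻¹ ≤ 1 := inv_le_one_of_one_le₀ (one_le_pow₀ one_le_two)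
    refine le_trans ?_ (pow_mul_one_sub_pow_le (x := 2 * n) (d := d) (m := m) (by positivity)
      hq hδ ?_)
    · rw [mul_pow, mul_comm (2 ^ d : ℝ)]
      have : 0 ≤ 1 - ((2 : ℝ) ^ d)⁻¹ := sub_nonneg.2 hq
      gcongr
      exact_mod_cast Nat.choose_le_pow n d
    · rwa [inv_mul_eq_div, le_div_iff₀ (by positivity), mul_comm]
  have hq : ((2 : ℝ≥0∞) ^ d)⁻¹ ≤ 1 := ENNReal.inv_le_one.2 (one_le_pow₀ one_le_two)
  rw [ENNReal.le_ofReal_iff_toReal_le (by finiteness) hδ.le]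
  simpa [ENNReal.toReal_sub_of_le hq ENNReal.one_ne_top] using hreal

theorem stmt_0_general (n d m : ℕ) :
    (Measure.pi fun _ : Fin m => (PMF.uniformOfFintype (Fin n → Bool)).toMeasure)
        {s : Fin m → Fin n → Bool | ¬ IsUniversalSet n d (Set.range s)} ≤
      (n.choose d : ℝ≥0∞) * 2 ^ d * (1 - ((2 : ℝ≥0∞) ^ d)⁻¹) ^ m ∧
    ∀ δ : ℝ, 0 < δ → δ < 1 →
      (2 : ℝ) ^ d * (d * Real.log (2 * n) + Real.log (1 / δ)) ≤ (m : ℝ) →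
      ENNReal.ofReal (1 - δ) ≤
        (Measure.pi fun _ : Fin m => (PMF.uniformOfFintype (Fin n → Bool)).toMeasure)
          {s : Fin m → Fin n → Bool | IsUniversalSet n d (Set.range s)} := by
  refine ⟨measure_not_isUniversalSet_le n d m, fun δ hδ _ hm => ?_⟩
  calc ENNReal.ofReal (1 - δ) = 1 - ENNReal.ofReal δ := by
        rw [ENNReal.ofReal_sub _ hδ.le, ENNReal.ofReal_one]
    _ ≤ 1 - _ := tsub_le_tsub_left ((measure_not_isUniversalSet_le n d m).trans
        (choose_mul_two_pow_mul_one_sub_pow_le hδ hm)) 1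
    _ = _ := by
      rw [← prob_compl_eq_one_sub MeasurableSet.of_discrete, Set.compl_ofPred]
      simp only [not_not]

/-- For `1 ≤ d ≤ n` and `s⁽¹⁾,…,s⁽ᵐ⁾` independent uniform elements of
`{0,1}ⁿ` (i.e. drawn from the product of `m` copies of the uniform measure on `{0,1}ⁿ`),
the probability that `S = {s⁽¹⁾,…,s⁽ᵐ⁾}` is not an `(n,d)`-universal set is at most
`C(n,d)·2^d·(1 − 2^{−d})^m`.  In particular, for every `δ ∈ (0,1)`, if
`m ≥ 2^d·(d·ln(2n) + ln(1/δ))` then `S` is `(n,d)`-universal with probability `≥ 1 − δ`. -/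
theorem stmt_0 (n d m : ℕ) (hd : 1 ≤ d) (hdn : d ≤ n) :
    (Measure.pi fun _ : Fin m => (PMF.uniformOfFintype (Fin n → Bool)).toMeasure)
        {s : Fin m → Fin n → Bool | ¬ IsUniversalSet n d (Set.range s)} ≤
      (n.choose d : ℝ≥0∞) * 2 ^ d * (1 - ((2 : ℝ≥0∞) ^ d)⁻¹) ^ m ∧
    ∀ δ : ℝ, 0 < δ → δ < 1 →
      (2 : ℝ) ^ d * (d * Real.log (2 * n) + Real.log (1 / δ)) ≤ (m : ℝ) →
      ENNReal.ofReal (1 - δ) ≤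
        (Measure.pi fun _ : Fin m => (PMF.uniformOfFintype (Fin n → Bool)).toMeasure)
          {s : Fin m → Fin n → Bool | IsUniversalSet n d (Set.range s)} :=
  stmt_0_general n d m
end

section
/- For all integers 1 ≤ d ≤ n there exists an (n,d)-universal set S ⊆ {0,1}ⁿ with |S| ≤ ⌈2^d·(d·ln(2n) + 1)⌉. -/
open Finset Fintype Function

theorem Real.mul_one_sub_pow_lt_one {M x : ℝ} {t : ℕ} (hM : 0 ≤ M) (hx : x ≤ 1)
    (ht : Real.log M + 1 ≤ t * x) : M * (1 - x) ^ t < 1 := by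
  rcases hM.eq_or_lt with rfl | hM
  · simp
  calc M * (1 - x) ^ t ≤ M * Real.exp (-x) ^ t := by
        gcongr
        exact Real.one_sub_le_exp_neg x
    _ = M * Real.exp (-(t * x)) := by rw [← Real.exp_nat_mul, mul_neg]
    _ ≤ M * Real.exp (-(Real.log M + 1)) := by gcongr
    _ = Real.exp (-1) := by
        rw [neg_add, Real.exp_add, Real.exp_neg, Real.exp_log hM, ← mul_assoc,
          mul_inv_cancel₀ hM.ne', one_mul]
    _ < 1 := by rw [Real.exp_lt_one_iff]; norm_num

noncomputable def Function.Injective.extensionsEquiv {ι κ α : Type*} {e : κ → ι}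
    (he : Injective e) (σ : κ → α) [DecidablePred (· ∈ Set.range e)] :
    {s : ι → α // s ∘ e = σ} ≃ ({i // i ∉ Set.range e} → α) where
  toFun s i := s.1 i
  invFun g :=
    ⟨fun i => if h : i ∈ Set.range e then σ ((Equiv.ofInjective e he).symm ⟨i, h⟩)
      else g ⟨i, h⟩, by
      funext k
      have hk : e k ∈ Set.range e := ⟨k, rfl⟩
      simp only [comp_apply, dif_pos hk, Equiv.ofInjective_symm_apply]⟩
  left_inv s := by
    obtain ⟨s, rfl⟩ := s
    ext i
    dsimp only
    split_ifs with h
    · obtain ⟨k, rfl⟩ := h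
      simp
    · rfl
  right_inv g := by
    funext i
    simp [dif_neg i.2]

theorem card_filter_comp_eq_mul {ι κ α : Type*} [Fintype ι] [DecidableEq ι] [Fintype κ]
    [Fintype α] [DecidableEq α] {e : κ → ι} (he : Injective e) (σ : κ → α) :
    #{s : ι → α | s ∘ e = σ} * card α ^ card κ = card α ^ card ι := by
  classical
  have hcompl : card {i // i ∉ Set.range e} + card κ = card ι := by
    rw [card_subtype_compl, Set.card_range_of_injective he]
    exact Nat.sub_add_cancel (card_le_of_injective e he)
  rw [← Fintype.card_subtype, card_congr (he.extensionsEquiv σ), card_fun, ← pow_add, hcompl]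

theorem exists_fun_forall_exists_mem_of_sum_lt {X C : Type*} [Fintype X] [DecidableEq X]
    [Fintype C] (A : C → Finset X) (t : ℕ) (h : ∑ c, #(A c)ᶜ ^ t < card X ^ t) :
    ∃ f : Fin t → X, ∀ c, ∃ i, f i ∈ A c := by
  by_contra! hmiss
  have hcover :
      (univ : Finset (Fin t → X)) ⊆ univ.biUnion fun c => piFinset fun _ => (A c)ᶜ := by
    intro f _
    obtain ⟨c, hc⟩ := hmiss f
    simpa using ⟨c, hc⟩
  have := calc card X ^ t = #(univ : Finset (Fin t → X)) := by simp
    _ ≤ #(univ.biUnion fun c => piFinset fun _ => (A c)ᶜ) := card_le_card hcover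
    _ ≤ ∑ c, #(piFinset fun _ : Fin t => (A c)ᶜ) := card_biUnion_le
    _ = ∑ c, #(A c)ᶜ ^ t := by simp
  omega

theorem exists_finset_card_le_forall_exists_mem {X C : Type*} [Fintype X] [DecidableEq X]
    [Nonempty X] [Fintype C] (A : C → Finset X) (p : ℝ) (hA : ∀ c, p * card X ≤ #(A c))
    (t : ℕ) (ht : card C * (1 - p) ^ t < 1) :
    ∃ S : Finset X, #S ≤ t ∧ ∀ c, ∃ s ∈ S, s ∈ A c := by
  have hX : (0 : ℝ) < card X := Nat.cast_pos.mpr Fintype.card_pos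
  have hcompl (c : C) : (#(A c)ᶜ : ℝ) ≤ (1 - p) * card X := by
    rw [card_compl, Nat.cast_sub (card_le_univ _)]
    linarith [hA c]
  have hsum : ∑ c, #(A c)ᶜ ^ t < card X ^ t := by
    suffices (∑ c, #(A c)ᶜ ^ t : ℝ) < card X ^ t by exact_mod_cast this
    calc (∑ c, #(A c)ᶜ ^ t : ℝ) ≤ ∑ _c : C, ((1 - p) * card X) ^ t :=
          sum_le_sum fun c _ => pow_le_pow_left₀ (Nat.cast_nonneg _) (hcompl c) t
      _ = card C * (1 - p) ^ t * card X ^ t := by simp [mul_pow, mul_assoc]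
      _ < card X ^ t := (mul_lt_mul_of_pos_right ht (pow_pos hX t)).trans_eq (one_mul _)
  obtain ⟨f, hf⟩ := exists_fun_forall_exists_mem_of_sum_lt A t hsum
  refine ⟨univ.image f, card_image_le.trans (by simp), fun c => ?_⟩
  obtain ⟨i, hi⟩ := hf c
  exact ⟨f i, mem_image_of_mem f (mem_univ i), hi⟩

theorem stmt_1_general (n d : ℕ) :
    ∃ S : Finset (Fin n → Bool), IsUniversalSet n d ↑S ∧
      S.card ≤ ⌈(2 : ℝ) ^ d * (d * Real.log (2 * n) + 1)⌉₊ := by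
  set t := ⌈(2 : ℝ) ^ d * (d * Real.log (2 * n) + 1)⌉₊
  let C := {p : (Fin d → Fin n) × (Fin d → Bool) // StrictMono p.1}
  let A (c : C) : Finset (Fin n → Bool) := {s | s ∘ c.1.1 = c.1.2}
  have hA (c : C) : (2 ^ d : ℝ)⁻¹ * card (Fin n → Bool) ≤ #(A c) := by
    have := card_filter_comp_eq_mul c.2.injective c.1.2
    simp only [card_bool, Fintype.card_fin, card_fun] at this ⊢
    rw [inv_mul_le_iff₀ (by positivity), mul_comm]
    exact_mod_cast this.ge
  have hC : (card C : ℝ) ≤ (2 * n) ^ d := by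
    have := card_subtype_le (fun p : (Fin d → Fin n) × (Fin d → Bool) => StrictMono p.1)
    simp only [card_prod, card_fun, Fintype.card_fin, card_bool] at this
    rw [mul_pow, mul_comm]
    exact_mod_cast this
  have hp : (2 ^ d : ℝ)⁻¹ ≤ 1 := inv_le_one_of_one_le₀ (one_le_pow₀ one_le_two)
  have hlog : Real.log ((2 * n) ^ d) + 1 ≤ t * (2 ^ d : ℝ)⁻¹ := by
    rw [Real.log_pow, ← div_eq_mul_inv, le_div_iff₀ (by positivity), mul_comm]
    exact Nat.le_ceil _
  have ht : card C * (1 - (2 ^ d : ℝ)⁻¹) ^ t < 1 :=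
    calc card C * (1 - (2 ^ d : ℝ)⁻¹) ^ t ≤ (2 * n) ^ d * (1 - (2 ^ d : ℝ)⁻¹) ^ t := by
          gcongr
      _ < 1 := Real.mul_one_sub_pow_lt_one (by positivity) hp hlog
  obtain ⟨S, hSt, hS⟩ := exists_finset_card_le_forall_exists_mem A _ hA t ht
  refine ⟨S, fun idx hidx σ => ?_, hSt⟩
  obtain ⟨s, hs, hsA⟩ := hS ⟨(idx, σ), hidx⟩
  exact ⟨s, hs, fun j => congrFun (mem_filter.mp hsA).2 j⟩

/-- For all integers `1 ≤ d ≤ n` there exists an `(n,d)`-universal set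
`S ⊆ {0,1}ⁿ` with `|S| ≤ ⌈2^d·(d·ln(2n) + 1)⌉`. -/
theorem stmt_1 (n d : ℕ) (hd : 1 ≤ d) (hdn : d ≤ n) :
    ∃ S : Finset (Fin n → Bool), IsUniversalSet n d ↑S ∧
      S.card ≤ ⌈(2 : ℝ) ^ d * (d * Real.log (2 * n) + 1)⌉₊ :=
  stmt_1_general n d
end

section
/- Let d ≥ 1 be an integer and let f : {0,1}ⁿ → {0,1} have at most d relevant variables. Let a ∈ {0,1}ⁿ be an assignment, let j be an index such that x_j is sensitive in f with respect to a, and let i be an index such that x_i is irrelevant in f. Let b ∈ {0,1}ⁿ be random with independent coordinates, each equal to 1 with probability 1/(3d). Then Pr[f(a ⊕ b) = f(a) and b_i = 1] ≥ 1/(5d), and Pr[f(a ⊕ b) = f(a) and b_j = 1] ≤ 1/(10d), where a ⊕ b denotes coordinatewise XOR. -/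
/-!
Write `p = 1/(3d)` and `R` for the set of relevant variables, so `|R| ≤ d`; the value of `f`
only depends on the coordinates in `R`. If `b_i = 1` and `b` vanishes on `R`, then `a ⊕ b` agrees
with `a` on `R`, and since `i ∉ R` this cylinder has probability
`p (1 - p)^|R| ≥ p (1 - d p) = 2p/3 ≥ 1/(5d)` by Bernoulli's inequality.
If `b_j = 1` and `b` vanishes on `R \ {j}`, then `a ⊕ b` agrees on `R` with `a` flipped at `j`,
so `f` changes value. Hence the second event misses that cylinder and has probability at most
`p (1 - (1 - p)^m)` with `m < d`, where `(1 - p)^m ≥ exp (-m p / (1 - p)) ≥ exp (-1/3) ≥ 7/10`.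
-/

open MeasureTheory
open scoped ENNReal

/-- The variable `x_i` is relevant in the boolean function `f` if flipping the `i`-th
coordinate of some assignment changes the value of `f`. -/
def IsRelevant {n : ℕ} (f : (Fin n → Bool) → Bool) (i : Fin n) : Prop :=
  ∃ a : Fin n → Bool, f (Function.update a i false) ≠ f (Function.update a i true)

/-- The variable `x_i` is sensitive in `f` with respect to the assignment `a`. -/
def IsSensitive {n : ℕ} (f : (Fin n → Bool) → Bool) (a : Fin n → Bool) (i : Fin n) : Prop :=
  f (Function.update a i false) ≠ f (Function.update a i true)

/-- The product measure on `{0,1}ⁿ` in which each coordinate is independently `true`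
with probability `1/(3d)`. -/
noncomputable def bernoulliPi (n d : ℕ) : Measure (Fin n → Bool) :=
  Measure.pi fun _ : Fin n =>
    (3 * (d : ℝ≥0∞))⁻¹ • Measure.dirac true + (1 - (3 * (d : ℝ≥0∞))⁻¹) • Measure.dirac false

section BooleanFunction

variable {n : ℕ} {f : (Fin n → Bool) → Bool}

lemma apply_update_of_not_isRelevant {k : Fin n} (hk : ¬ IsRelevant f k)
    (b : Fin n → Bool) (x : Bool) : f (Function.update b k x) = f b := by
  have hconst : ∀ y, f (Function.update b k y) = f (Function.update b k false) := by
    rintro (_ | _)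
    · rfl
    · exact (not_not.mp (not_exists.mp hk b)).symm
  rw [hconst, ← hconst (b k), Function.update_eq_self]

lemma apply_eq_of_forall_isRelevant_eq {b b' : Fin n → Bool}
    (h : ∀ k, IsRelevant f k → b k = b' k) : f b = f b' := by
  classical
  suffices ∀ s : Finset (Fin n), ∀ b', (∀ k ∉ s, b k = b' k) →
      (∀ k, IsRelevant f k → b k = b' k) → f b = f b' from
    this Finset.univ b' (by simp) h
  intro s
  induction s using Finset.induction_on with
  | empty => exact fun b' hb _ => congrArg f (funext fun k => hb k (Finset.notMem_empty k))
  | insert k s _ ih =>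
    intro b' hout hrel
    have hk : f (Function.update b' k (b k)) = f b' := by
      by_cases hkrel : IsRelevant f k
      · rw [hrel k hkrel, Function.update_eq_self]
      · exact apply_update_of_not_isRelevant hkrel b' (b k)
    rw [← hk]
    refine ih _ (fun m hm => ?_) (fun m hm => ?_) <;> rcases eq_or_ne m k with rfl | hmk
    · simp
    · simpa [hmk] using hout m (by simp [hm, hmk])
    · simp
    · simpa [hmk] using hrel m hm

lemma IsSensitive.apply_update_not_ne {a : Fin n → Bool} {j : Fin n} (hj : IsSensitive f a j) :
    f (Function.update a j (!a j)) ≠ f a := by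
  intro h
  apply hj
  cases haj : a j <;> rw [haj] at h <;>
    simp only [Bool.not_false, Bool.not_true] at h <;>
    simp only [← haj, Function.update_eq_self, h]

end BooleanFunction

noncomputable def biasedCoin (p : ℝ≥0∞) : Measure Bool :=
  p • Measure.dirac true + (1 - p) • Measure.dirac false

section BiasedCoin

variable {p : ℝ≥0∞}

@[simp]
lemma biasedCoin_true : biasedCoin p {true} = p := by
  simp [biasedCoin]

@[simp]
lemma biasedCoin_false : biasedCoin p {false} = 1 - p := by
  simp [biasedCoin]

lemma isProbabilityMeasure_biasedCoin (hp : p ≤ 1) : IsProbabilityMeasure (biasedCoin p) :=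
  ⟨by simp [biasedCoin, add_tsub_cancel_of_le hp]⟩

variable {ι : Type*} [Fintype ι] [DecidableEq ι]

lemma pi_biasedCoin_cylinder (hp : p ≤ 1) {j : ι} {F : Finset ι} (hj : j ∉ F) :
    Measure.pi (fun _ : ι => biasedCoin p) {b | b j = true ∧ ∀ k ∈ F, b k = false} =
      p * (1 - p) ^ F.card := by
  have := isProbabilityMeasure_biasedCoin hp
  let t : ι → Set Bool := fun k => if k = j then {true} else if k ∈ F then {false} else Set.univ
  have hcyl : {b : ι → Bool | b j = true ∧ ∀ k ∈ F, b k = false} = Set.univ.pi t := by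
    ext b
    simp only [Set.mem_ofPred_eq, Set.mem_univ_pi, t]
    constructor
    · rintro ⟨hbj, hbF⟩ k
      split_ifs with hkj hkF
      · simp [hkj, hbj]
      · simp [hbF k hkF]
      · trivial
    · intro hb
      refine ⟨by simpa using hb j, fun k hk => ?_⟩
      have hkj : k ≠ j := by rintro rfl; exact hj hk
      simpa [hkj, hk] using hb k
  have ht : ∀ k, biasedCoin p (t k) = (if k = j then p else 1) * (if k ∈ F then 1 - p else 1) := by
    intro k
    by_cases hkj : k = j
    · subst hkj; simp [t, hj]
    · by_cases hkF : k ∈ F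
      · simp [t, hkj, hkF]
      · simp only [t, hkj, hkF, if_false, measure_univ, mul_one]
  rw [hcyl, Measure.pi_pi, Finset.prod_congr rfl fun k _ => ht k, Finset.prod_mul_distrib,
    Finset.prod_ite_eq', Finset.prod_ite_mem, Finset.univ_inter, Finset.prod_const]
  simp

lemma pi_biasedCoin_coord (hp : p ≤ 1) (j : ι) :
    Measure.pi (fun _ : ι => biasedCoin p) {b | b j = true} = p := by
  simpa using pi_biasedCoin_cylinder hp (Finset.notMem_empty j)

end BiasedCoin

lemma one_sub_mul_le_one_sub_pow {x : ℝ} (hx : x ≤ 1) (m : ℕ) : 1 - m * x ≤ (1 - x) ^ m := by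
  simpa [sub_eq_add_neg] using one_add_mul_le_pow (a := -x) (by linarith) m

lemma exp_neg_mul_div_le_one_sub_pow {x : ℝ} (hx : x < 1) (m : ℕ) :
    Real.exp (-(m * (x / (1 - x)))) ≤ (1 - x) ^ m := by
  have hpos : 0 < 1 - x := by linarith
  have hlog : -(x / (1 - x)) ≤ Real.log (1 - x) := by
    have := Real.one_sub_inv_le_log_of_pos hpos
    have h : 1 - (1 - x)⁻¹ = -(x / (1 - x)) := by field_simp; ring
    linarith
  calc Real.exp (-(m * (x / (1 - x)))) = Real.exp (m * -(x / (1 - x))) := by ring_nf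
    _ ≤ Real.exp (m * Real.log (1 - x)) := by gcongr
    _ = (1 - x) ^ m := by rw [Real.exp_nat_mul, Real.exp_log hpos]

lemma seven_tenths_le_exp_neg_third : (7 / 10 : ℝ) ≤ Real.exp (-(1 / 3)) := by
  refine le_of_pow_le_pow_left₀ three_ne_zero (Real.exp_nonneg _) ?_
  rw [← Real.exp_nat_mul, show ((3 : ℕ) : ℝ) * -(1 / 3) = -1 by norm_num, Real.exp_neg,
    le_inv_comm₀ (by norm_num) (Real.exp_pos 1)]
  linarith [Real.exp_one_lt_d9]

section Estimates

variable {d : ℕ}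

lemma inv_five_mul_le_mul_one_sub_pow (hd : 1 ≤ d) {r : ℕ} (hr : r ≤ d) :
    (5 * d : ℝ)⁻¹ ≤ (3 * d : ℝ)⁻¹ * (1 - (3 * d : ℝ)⁻¹) ^ r := by
  have hd' : (1 : ℝ) ≤ d := by exact_mod_cast hd
  have hx : (3 * d : ℝ)⁻¹ ≤ 1 := inv_le_one_of_one_le₀ (by linarith)
  have hbern : (2 / 3 : ℝ) ≤ (1 - (3 * d : ℝ)⁻¹) ^ r := by
    calc (2 / 3 : ℝ) ≤ 1 - d * (3 * d : ℝ)⁻¹ := by field_simp; norm_num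
      _ ≤ 1 - r * (3 * d : ℝ)⁻¹ := by gcongr
      _ ≤ _ := one_sub_mul_le_one_sub_pow hx r
  calc (5 * d : ℝ)⁻¹ ≤ (3 * d : ℝ)⁻¹ * (2 / 3) := by
        rw [inv_mul_eq_div, div_div, ← inv_div]; gcongr; linarith
    _ ≤ _ := by gcongr

lemma inv_three_mul_sub_le_inv_ten_mul (hd : 1 ≤ d) {m : ℕ} (hm : m < d) :
    (3 * d : ℝ)⁻¹ - (3 * d : ℝ)⁻¹ * (1 - (3 * d : ℝ)⁻¹) ^ m ≤ (10 * d : ℝ)⁻¹ := by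
  have hd' : (1 : ℝ) ≤ d := by exact_mod_cast hd
  have hm' : (m : ℝ) + 1 ≤ d := by exact_mod_cast hm
  have hx : (3 * d : ℝ)⁻¹ < 1 := inv_lt_one_of_one_lt₀ (by linarith)
  have hexp : -(1 / 3 : ℝ) ≤ -(m * ((3 * d : ℝ)⁻¹ / (1 - (3 * d : ℝ)⁻¹))) := by
    rw [neg_le_neg_iff, show (3 * d : ℝ)⁻¹ / (1 - (3 * d : ℝ)⁻¹) = (3 * d - 1 : ℝ)⁻¹ by
      field_simp, ← div_eq_mul_inv, div_le_iff₀ (by linarith)]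
    linarith
  have h7 : (7 / 10 : ℝ) ≤ (1 - (3 * d : ℝ)⁻¹) ^ m :=
    seven_tenths_le_exp_neg_third.trans <|
      (Real.exp_le_exp.mpr hexp).trans (exp_neg_mul_div_le_one_sub_pow hx m)
  calc (3 * d : ℝ)⁻¹ - (3 * d : ℝ)⁻¹ * (1 - (3 * d : ℝ)⁻¹) ^ m
      ≤ (3 * d : ℝ)⁻¹ - (3 * d : ℝ)⁻¹ * (7 / 10) := by gcongr
    _ = (10 * d : ℝ)⁻¹ := by field_simp; norm_num

end Estimates

lemma ENNReal.ofReal_mul_one_sub_pow {x : ℝ} (hx₀ : 0 ≤ x) (hx₁ : x ≤ 1) (r : ℕ) :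
    ENNReal.ofReal x * (1 - ENNReal.ofReal x) ^ r = ENNReal.ofReal (x * (1 - x) ^ r) := by
  rw [← ENNReal.ofReal_one, ← ENNReal.ofReal_sub _ hx₀, ← ENNReal.ofReal_pow (by linarith),
    ← ENNReal.ofReal_mul hx₀]

lemma inv_three_mul_eq_ofReal {d : ℕ} (hd : 1 ≤ d) :
    (3 * (d : ℝ≥0∞))⁻¹ = ENNReal.ofReal (3 * d : ℝ)⁻¹ := by
  rw [ENNReal.ofReal_inv_of_pos (by positivity), ENNReal.ofReal_mul (by norm_num),
    ENNReal.ofReal_natCast, ENNReal.ofReal_ofNat]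

open Classical in
noncomputable def relevantVars {n : ℕ} (f : (Fin n → Bool) → Bool) : Finset (Fin n) :=
  Finset.univ.filter (IsRelevant f)

section Events

variable {n : ℕ} {f : (Fin n → Bool) → Bool}

@[simp]
lemma mem_relevantVars {k : Fin n} : k ∈ relevantVars f ↔ IsRelevant f k := by
  simp [relevantVars]

lemma card_relevantVars : (relevantVars f).card = {k | IsRelevant f k}.ncard := by
  rw [← Set.ncard_coe_finset]
  congr
  ext k
  simp

lemma cylinder_subset_apply_xor_eq (a : Fin n → Bool) (i : Fin n) :
    {b : Fin n → Bool | b i = true ∧ ∀ k ∈ relevantVars f, b k = false} ⊆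
      {b | f (fun k => xor (a k) (b k)) = f a ∧ b i = true} := by
  rintro b ⟨hbi, hbR⟩
  refine ⟨apply_eq_of_forall_isRelevant_eq fun k hk => ?_, hbi⟩
  simp [hbR k (mem_relevantVars.mpr hk)]

lemma apply_xor_eq_subset_diff_cylinder {a : Fin n → Bool} {j : Fin n}
    (hj : IsSensitive f a j) :
    {b : Fin n → Bool | f (fun k => xor (a k) (b k)) = f a ∧ b j = true} ⊆
      {b | b j = true} \ {b | b j = true ∧ ∀ k ∈ (relevantVars f).erase j, b k = false} := by
  rintro b ⟨hfb, hbj⟩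
  refine ⟨hbj, fun ⟨_, hbR⟩ => hj.apply_update_not_ne (hfb ▸ ?_)⟩
  refine apply_eq_of_forall_isRelevant_eq fun k hk => ?_
  rcases eq_or_ne k j with rfl | hkj
  · simp [hbj]
  · simp [hkj, hbR k (Finset.mem_erase.mpr ⟨hkj, mem_relevantVars.mpr hk⟩)]

end Events

/-- Let `f` be a boolean function with at most `d` relevant variables,
`a` an assignment, `x_j` sensitive in `f` w.r.t. `a`, and `x_i` irrelevant in `f`.
If `b` is random with independent coordinates each equal to `1` with probability
`1/(3d)`, then `Pr[f(a ⊕ b) = f(a) ∧ b_i = 1] ≥ 1/(5d)` and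
`Pr[f(a ⊕ b) = f(a) ∧ b_j = 1] ≤ 1/(10d)`. -/
theorem stmt_3 (n d : ℕ) (hd : 1 ≤ d) (f : (Fin n → Bool) → Bool)
    (hf : Set.ncard {i | IsRelevant f i} ≤ d)
    (a : Fin n → Bool) (j : Fin n) (hj : IsSensitive f a j)
    (i : Fin n) (hi : ¬ IsRelevant f i) :
    ENNReal.ofReal (1 / (5 * (d : ℝ))) ≤
      bernoulliPi n d {b : Fin n → Bool | f (fun k => xor (a k) (b k)) = f a ∧ b i = true} ∧
    bernoulliPi n d {b : Fin n → Bool | f (fun k => xor (a k) (b k)) = f a ∧ b j = true} ≤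
      ENNReal.ofReal (1 / (10 * (d : ℝ))) := by
  set x : ℝ := (3 * d : ℝ)⁻¹
  have hx₀ : 0 ≤ x := by positivity
  have hx₁ : x ≤ 1 := inv_le_one_of_one_le₀ (by norm_cast; omega)
  have hp : (3 * (d : ℝ≥0∞))⁻¹ ≤ 1 := by
    rw [inv_three_mul_eq_ofReal hd]
    exact ENNReal.ofReal_le_one.mpr hx₁
  have hμ : bernoulliPi n d = Measure.pi fun _ => biasedCoin (3 * (d : ℝ≥0∞))⁻¹ := rfl
  have hR : (relevantVars f).card ≤ d := card_relevantVars.trans_le hf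
  have hjR : j ∈ relevantVars f := mem_relevantVars.mpr ⟨a, hj⟩
  have := isProbabilityMeasure_biasedCoin hp
  rw [one_div, one_div]
  constructor
  · calc ENNReal.ofReal (5 * d : ℝ)⁻¹ ≤ ENNReal.ofReal (x * (1 - x) ^ (relevantVars f).card) :=
          ENNReal.ofReal_le_ofReal (inv_five_mul_le_mul_one_sub_pow hd hR)
      _ = bernoulliPi n d {b | b i = true ∧ ∀ k ∈ relevantVars f, b k = false} := by
          rw [hμ, pi_biasedCoin_cylinder hp (mt mem_relevantVars.mp hi),
            inv_three_mul_eq_ofReal hd, ENNReal.ofReal_mul_one_sub_pow hx₀ hx₁]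
      _ ≤ _ := measure_mono (cylinder_subset_apply_xor_eq a i)
  · calc _ ≤ bernoulliPi n d ({b | b j = true} \
          {b | b j = true ∧ ∀ k ∈ (relevantVars f).erase j, b k = false}) :=
          measure_mono (apply_xor_eq_subset_diff_cylinder hj)
      _ = ENNReal.ofReal (x - x * (1 - x) ^ ((relevantVars f).erase j).card) := by
          rw [hμ, measure_sdiff (fun b hb => hb.1) MeasurableSet.of_discrete.nullMeasurableSet
              (measure_ne_top _ _),
            pi_biasedCoin_coord hp, pi_biasedCoin_cylinder hp (Finset.notMem_erase j _),
            inv_three_mul_eq_ofReal hd, ENNReal.ofReal_mul_one_sub_pow hx₀ hx₁,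
            ENNReal.ofReal_sub _ (by positivity)]
      _ ≤ ENNReal.ofReal (10 * d : ℝ)⁻¹ := ENNReal.ofReal_le_ofReal <|
          inv_three_mul_sub_le_inv_ten_mul hd <| by
            rw [Finset.card_erase_of_mem hjR]; omega
end

section
/- Let m ≥ 1 and 1 ≤ t ≤ 2m be integers, and let s₁,…,s_t and r₁,…,r_t be nonnegative integers with ∑_{i=1}^t s_i = ∑_{i=1}^t r_i = m, such that for every i, if s_i·r_i = 0 then s_i + r_i = 1. Then 2·∑_{i=1}^t s_i·r_i ≤ 2m² − (t−1)·m. -/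
/-!
Split the components into the set `A` of those with `sᵢ, rᵢ ≥ 1` and the rest, which are
single vertices and contribute nothing to `∑ sᵢ rᵢ` but one each to `t`. With `a = #A`,
`S = ∑_A sᵢ`, `R = ∑_A rᵢ` this gives `t = 2m + a - S - R`. On `A`, merging all components
into one with `(S - a + 1, R - a + 1)` vertices plus `a - 1` components `(1, 1)` can only increase
`∑ sᵢ rᵢ`, because `∑ xᵢ yᵢ ≤ (∑ xᵢ)(∑ yᵢ)` for `xᵢ = sᵢ - 1`, `yᵢ = rᵢ - 1 ≥ 0`. The claim
is then a quadratic inequality in `m, a, S, R`.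
-/

open Finset

theorem Finset.sum_mul_le_sum_mul_sum {ι R : Type*} [Semiring R] [PartialOrder R]
    [IsOrderedRing R] (A : Finset ι) {f g : ι → R} (hf : ∀ i ∈ A, 0 ≤ f i)
    (hg : ∀ i ∈ A, 0 ≤ g i) : ∑ i ∈ A, f i * g i ≤ (∑ i ∈ A, f i) * ∑ i ∈ A, g i := by
  rw [sum_mul]
  exact sum_le_sum fun i hi =>
    mul_le_mul_of_nonneg_left (single_le_sum hg hi) (hf i hi)

theorem Finset.sum_mul_le_of_one_le {ι R : Type*} [CommRing R] [PartialOrder R]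
    [IsOrderedRing R] (A : Finset ι) {s r : ι → R} (hs : ∀ i ∈ A, 1 ≤ s i)
    (hr : ∀ i ∈ A, 1 ≤ r i) :
    ∑ i ∈ A, s i * r i ≤
      (∑ i ∈ A, s i - #A) * (∑ i ∈ A, r i - #A) + (∑ i ∈ A, s i + ∑ i ∈ A, r i - #A) := by
  have hprod := A.sum_mul_le_sum_mul_sum (f := fun i => s i - 1) (g := fun i => r i - 1)
    (fun i hi => sub_nonneg.2 (hs i hi)) (fun i hi => sub_nonneg.2 (hr i hi))
  calc ∑ i ∈ A, s i * r i = ∑ i ∈ A, (s i - 1) * (r i - 1) + ∑ i ∈ A, (s i + r i - 1) := by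
        rw [← sum_add_distrib]
        exact sum_congr rfl fun i _ => by ring
    _ ≤ (∑ i ∈ A, (s i - 1)) * (∑ i ∈ A, (r i - 1)) + ∑ i ∈ A, (s i + r i - 1) := by gcongr
    _ = _ := by simp only [sum_sub_distrib, sum_add_distrib, sum_const, nsmul_one]

theorem two_mul_merged_le (m a S R : ℤ) (ha : 1 ≤ a) (hS : a ≤ S) (hR : a ≤ R) (hSm : S ≤ m)
    (hRm : R ≤ m) :
    2 * ((S - a) * (R - a) + (S + R - a)) ≤ 2 * m ^ 2 - (2 * m + a - S - R - 1) * m := by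
  nlinarith [mul_nonneg (sub_nonneg.2 hS) (by linarith : (0 : ℤ) ≤ m - R + a - 1),
    mul_nonneg (by linarith : (0 : ℤ) ≤ m - S + a - 1) (sub_nonneg.2 hR),
    mul_nonneg (by linarith : (0 : ℤ) ≤ m) (sub_nonneg.2 ha)]

theorem card_eq_two_mul_sub_of_sum_eq {ι : Type*} [Fintype ι] {s r : ι → ℤ} {m : ℤ}
    (hs : ∑ i, s i = m) (hr : ∑ i, r i = m) (h01 : ∀ i, s i * r i = 0 → s i + r i = 1) :
    (Fintype.card ι : ℤ) =
      2 * m + #{i | s i * r i ≠ 0} - ∑ i with s i * r i ≠ 0, s i - ∑ i with s i * r i ≠ 0, r i := by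
  have hcard : #{i | s i * r i ≠ 0} + #{i | ¬s i * r i ≠ 0} = Fintype.card ι :=
    card_filter_add_card_filter_not _
  have hsingle : ∑ i with ¬s i * r i ≠ 0, (s i + r i) = #{i | ¬s i * r i ≠ 0} := by
    rw [sum_congr rfl fun i hi => h01 i (not_not.1 (mem_filter.1 hi).2), sum_const, nsmul_one]
  have hsplit_s := sum_filter_add_sum_filter_not univ (fun i => s i * r i ≠ 0) s
  have hsplit_r := sum_filter_add_sum_filter_not univ (fun i => s i * r i ≠ 0) r
  rw [sum_add_distrib] at hsingle
  push_cast [← hcard]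
  linarith

theorem stmt_5_general (m t : ℕ)
    (s r : Fin t → ℤ) (hs0 : ∀ i, 0 ≤ s i) (hr0 : ∀ i, 0 ≤ r i)
    (hs : ∑ i, s i = (m : ℤ)) (hr : ∑ i, r i = (m : ℤ))
    (h01 : ∀ i, s i * r i = 0 → s i + r i = 1) :
    2 * ∑ i, s i * r i ≤ 2 * (m : ℤ) ^ 2 - ((t : ℤ) - 1) * m := by
  have ht := card_eq_two_mul_sub_of_sum_eq hs hr h01
  rw [Fintype.card_fin] at ht
  rw [ht, ← sum_filter_ne_zero]
  set A : Finset (Fin t) := {i | s i * r i ≠ 0}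
  have hsA : ∀ i ∈ A, 1 ≤ s i := fun i hi =>
    lt_of_le_of_ne (hs0 i) (Ne.symm (left_ne_zero_of_mul (mem_filter.1 hi).2))
  have hrA : ∀ i ∈ A, 1 ≤ r i := fun i hi =>
    lt_of_le_of_ne (hr0 i) (Ne.symm (right_ne_zero_of_mul (mem_filter.1 hi).2))
  have hSm : ∑ i ∈ A, s i ≤ m := hs ▸ sum_le_univ_sum_of_nonneg hs0
  have hRm : ∑ i ∈ A, r i ≤ m := hr ▸ sum_le_univ_sum_of_nonneg hr0
  clear_value A
  obtain rfl | hA := A.eq_empty_or_nonempty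
  · simp only [sum_empty, card_empty, Nat.cast_zero]
    ring_nf
    positivity
  have ha : (1 : ℤ) ≤ #A := by exact_mod_cast hA.card_pos
  have haS : (#A : ℤ) ≤ ∑ i ∈ A, s i := by simpa using card_nsmul_le_sum A s 1 hsA
  have haR : (#A : ℤ) ≤ ∑ i ∈ A, r i := by simpa using card_nsmul_le_sum A r 1 hrA
  linarith [A.sum_mul_le_of_one_le hsA hrA, two_mul_merged_le m #A _ _ ha haS haR hSm hRm]

/-- Let `m ≥ 1` and `1 ≤ t ≤ 2m` be integers, and let `s₁,…,s_t` and
`r₁,…,r_t` be nonnegative integers with `∑ sᵢ = ∑ rᵢ = m`, such that for every `i`,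
if `sᵢ·rᵢ = 0` then `sᵢ + rᵢ = 1`.  Then `2·∑ sᵢ·rᵢ ≤ 2m² − (t−1)·m`. -/
theorem stmt_5 (m t : ℕ) (hm : 1 ≤ m) (ht1 : 1 ≤ t) (ht2 : t ≤ 2 * m)
    (s r : Fin t → ℤ) (hs0 : ∀ i, 0 ≤ s i) (hr0 : ∀ i, 0 ≤ r i)
    (hs : ∑ i, s i = (m : ℤ)) (hr : ∑ i, r i = (m : ℤ))
    (h01 : ∀ i, s i * r i = 0 → s i + r i = 1) :
    2 * ∑ i, s i * r i ≤ 2 * (m : ℤ) ^ 2 - ((t : ℤ) - 1) * m :=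
  stmt_5_general m t s r hs0 hr0 hs hr h01
end

section
/- Let G be a bipartite graph with parts L and R, each of cardinality m ≥ 1, and suppose G has exactly t connected components. Then 2·|{(u,v) ∈ L × R : u and v lie in distinct connected components of G}| ≥ (t−1)·m. -/
/-!
Sort the vertices by connected component. A component `c` with `a` vertices in `L` and `b` in
`R` accounts for `a (m - b) + b (m - a)` of the `L`–`R` and `R`–`L` pairs split by the partition
into components, and this is at least `m` as soon as `c` is neither empty nor all of `V`, i.e.
when `t ≥ 2`. Summing over the `t` components, twice the number of split `L × R` pairs is at
least `t m`.
-/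

open Finset

/-- `2 (a b' + b a') = (a + b) (a' + b') + (a - b)²`, and a product of two positive integers
is at least their sum minus one. -/
lemma add_le_mul_add_mul_of_add_eq_add {a a' b b' : ℕ} (h : a + a' = b + b')
    (hab : 0 < a + b) (hab' : 0 < a' + b') : a + a' ≤ a * b' + b * a' := by
  zify at *
  nlinarith [sq_nonneg ((a : ℤ) - b)]

section

variable {V κ : Type*} [DecidableEq κ] (f : V → κ)

lemma card_filter_ne_comm (L R : Finset V) :
    #{p ∈ L ×ˢ R | f p.1 ≠ f p.2} = #{p ∈ R ×ˢ L | f p.1 ≠ f p.2} :=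
  card_equiv (Equiv.prodComm V V) fun _ ↦ by simp only [mem_filter, mem_product]; grind

variable [Fintype κ]

lemma card_filter_ne_eq_sum_mul (L R : Finset V) :
    #{p ∈ L ×ˢ R | f p.1 ≠ f p.2} = ∑ c, #{u ∈ L | f u = c} * #{v ∈ R | f v ≠ c} := by
  rw [card_eq_sum_card_fiberwise (f := fun p ↦ f p.1) (t := univ) (fun _ _ ↦ mem_univ _)]
  refine sum_congr rfl fun c _ ↦ ?_
  rw [← card_product]
  congr 1
  ext ⟨u, v⟩
  simp only [mem_filter, mem_product]
  grind

lemma two_mul_card_filter_ne (L R : Finset V) :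
    2 * #{p ∈ L ×ˢ R | f p.1 ≠ f p.2} =
      ∑ c, (#{u ∈ L | f u = c} * #{v ∈ R | f v ≠ c} +
        #{v ∈ R | f v = c} * #{u ∈ L | f u ≠ c}) := by
  rw [two_mul]
  nth_rw 2 [card_filter_ne_comm]
  rw [card_filter_ne_eq_sum_mul, card_filter_ne_eq_sum_mul, sum_add_distrib]

variable [Fintype V] [DecidableEq V]

lemma card_filter_add_card_filter_compl_pos (L : Finset V) {P : V → Prop} [DecidablePred P]
    (hP : ∃ v, P v) : 0 < #{u ∈ L | P u} + #{u ∈ Lᶜ | P u} := by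
  obtain ⟨v, hv⟩ := hP
  by_cases hvL : v ∈ L
  · exact Nat.add_pos_left (card_pos.2 ⟨v, by simp [hvL, hv]⟩) _
  · exact Nat.add_pos_right _ (card_pos.2 ⟨v, by simp [hvL, hv]⟩)

variable {f} in
theorem card_mul_le_two_mul_card_filter_ne (hf : Function.Surjective f)
    (hκ : 1 < Fintype.card κ) {m : ℕ} (L : Finset V) (hL : #L = m) (hLc : #Lᶜ = m) :
    Fintype.card κ * m ≤ 2 * #{p ∈ L ×ˢ Lᶜ | f p.1 ≠ f p.2} := by
  rw [two_mul_card_filter_ne, ← smul_eq_mul, ← card_univ, ← sum_const]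
  refine sum_le_sum fun c _ ↦ ?_
  obtain ⟨d, hdc⟩ := Fintype.exists_ne_of_one_lt_card hκ c
  have hsplit : #{u ∈ L | f u = c} + #{u ∈ L | f u ≠ c} = m :=
    (card_filter_add_card_filter_not _).trans hL
  have hsplit' : #{v ∈ Lᶜ | f v = c} + #{v ∈ Lᶜ | f v ≠ c} = m :=
    (card_filter_add_card_filter_not _).trans hLc
  rw [← hsplit]
  refine add_le_mul_add_mul_of_add_eq_add (hsplit.trans hsplit'.symm)
    (card_filter_add_card_filter_compl_pos L (hf c)) ?_
  obtain ⟨v, rfl⟩ := hf d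
  exact card_filter_add_card_filter_compl_pos L ⟨v, hdc⟩

end

theorem stmt_6_general {V : Type*} [Fintype V] (G : SimpleGraph V) (L R : Set V) (m : ℕ)
    (hpart : ∀ v, v ∈ L ↔ v ∉ R)
    (hL : L.ncard = m) (hR : R.ncard = m)
    (t : ℕ) (ht : t = Nat.card G.ConnectedComponent) :
    (t - 1) * m ≤
      2 * Set.ncard {p : V × V | p.1 ∈ L ∧ p.2 ∈ R ∧
        G.connectedComponentMk p.1 ≠ G.connectedComponentMk p.2} := by
  classical
  have := Fintype.ofFinite G.ConnectedComponent
  rw [Nat.card_eq_fintype_card] at ht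
  subst ht
  rcases le_or_gt (Fintype.card G.ConnectedComponent) 1 with ht | ht
  · simp [Nat.sub_eq_zero_of_le ht]
  have hRL : R.toFinset = L.toFinsetᶜ := by ext v; simp [hpart]
  have hpairs : {p : V × V | p.1 ∈ L ∧ p.2 ∈ R ∧
      G.connectedComponentMk p.1 ≠ G.connectedComponentMk p.2} =
      ↑{p ∈ L.toFinset ×ˢ L.toFinsetᶜ |
        G.connectedComponentMk p.1 ≠ G.connectedComponentMk p.2} := by
    ext p; simp [← hRL, and_assoc]
  rw [hpairs, Set.ncard_coe_finset]
  refine (Nat.mul_le_mul_right m (Nat.sub_le _ 1)).trans <|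
    card_mul_le_two_mul_card_filter_ne (fun c ↦ c.exists_rep) ht _ ?_ ?_
  · rwa [← Set.ncard_eq_toFinset_card']
  · rwa [← hRL, ← Set.ncard_eq_toFinset_card']

/-- Let `G` be a bipartite graph with parts `L` and `R`, each of
cardinality `m ≥ 1`, and suppose `G` has exactly `t` connected components.  Then
`2·|{(u,v) ∈ L × R : u, v in distinct connected components}| ≥ (t−1)·m`. -/
theorem stmt_6 {V : Type*} [Fintype V] (G : SimpleGraph V) (L R : Set V) (m : ℕ)
    (hm : 1 ≤ m)
    (hpart : ∀ v, v ∈ L ↔ v ∉ R)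
    (hL : L.ncard = m) (hR : R.ncard = m)
    (hbip : ∀ u v, G.Adj u v → (u ∈ L ∧ v ∈ R) ∨ (u ∈ R ∧ v ∈ L))
    (t : ℕ) (ht : t = Nat.card G.ConnectedComponent) :
    (t - 1) * m ≤
      2 * Set.ncard {p : V × V | p.1 ∈ L ∧ p.2 ∈ R ∧
        G.connectedComponentMk p.1 ≠ G.connectedComponentMk p.2} :=
  stmt_6_general G L R m hpart hL hR t ht
end

section
/- For all integers 1 ≤ d ≤ n, the number of functions f : {0,1}ⁿ → {0,1} with at most d relevant variables is at least C(n,d)·2^{2^{d−1}}. -/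
open Finset Function

section

variable {n : ℕ}

theorem IsRelevant.mem_of_dependsOn {f : (Fin n → Bool) → Bool} {S : Set (Fin n)}
    (hf : DependsOn f S) {i : Fin n} (hi : IsRelevant f i) : i ∈ S := by
  by_contra hiS
  obtain ⟨a, ha⟩ := hi
  exact ha <| hf fun j hj => by
    rw [update_of_ne (ne_of_mem_of_not_mem hj hiS), update_of_ne (ne_of_mem_of_not_mem hj hiS)]

def juntaOf (S : Finset (Fin n)) (s : Fin n) (g : (S.erase s → Bool) → Bool)
    (a : Fin n → Bool) : Bool :=
  xor (g ((S.erase s).restrict a)) (decide (∀ j ∈ S, a j = true))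

variable {S : Finset (Fin n)} {s : Fin n}

theorem dependsOn_juntaOf (g : (S.erase s → Bool) → Bool) : DependsOn (juntaOf S s g) S := by
  intro a b hab
  have hres : (S.erase s).restrict a = (S.erase s).restrict b :=
    dependsOn_restrict _ fun j hj => hab j (mem_of_mem_erase hj)
  have hall : (∀ j ∈ S, a j = true) ↔ (∀ j ∈ S, b j = true) :=
    forall₂_congr fun j hj => by rw [hab j hj]
  simp only [juntaOf, hres, hall]

theorem juntaOf_of_apply_eq_false (g : (S.erase s → Bool) → Bool) {a : Fin n → Bool} {i : Fin n}
    (hi : i ∈ S) (ha : a i = false) : juntaOf S s g a = g ((S.erase s).restrict a) := by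
  have : ¬∀ j ∈ S, a j = true := fun h => by simpa [ha] using h i hi
  simp [juntaOf, this]

theorem restrict_erase_update (a : Fin n → Bool) (x : Bool) :
    (S.erase s).restrict (update a s x) = (S.erase s).restrict a :=
  dependsOn_restrict _ fun _ hj => update_of_ne (ne_of_mem_erase hj) _ _

theorem isRelevant_juntaOf (hs : s ∈ S) (g : (S.erase s → Bool) → Bool) {i : Fin n}
    (hi : i ∈ S) : IsRelevant (juntaOf S s g) i := by
  set one : Fin n → Bool := fun _ => true
  by_cases hg : g ((S.erase s).restrict (update one i false)) =
      g ((S.erase s).restrict (update one i true))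
  · refine ⟨one, ?_⟩
    have hone : juntaOf S s g one = !g ((S.erase s).restrict one) := by simp [juntaOf, one]
    rw [juntaOf_of_apply_eq_false g hi (update_self i false one), hg, update_eq_self, hone]
    exact Bool.not_ne_self _ |>.symm
  · have his : i ≠ s := by
      rintro rfl
      exact hg (by rw [restrict_erase_update, restrict_erase_update])
    refine ⟨update one s false, ?_⟩
    rw [← update_comm his, ← update_comm his]
    rwa [juntaOf_of_apply_eq_false g hs (update_self s false (update one i false)),
      juntaOf_of_apply_eq_false g hs (update_self s false (update one i true)),
      restrict_erase_update, restrict_erase_update]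

theorem setOf_isRelevant_juntaOf (hs : s ∈ S) (g : (S.erase s → Bool) → Bool) :
    {i | IsRelevant (juntaOf S s g) i} = S :=
  Set.Subset.antisymm (fun _ hi => IsRelevant.mem_of_dependsOn (dependsOn_juntaOf g) hi)
    fun _ hi => isRelevant_juntaOf hs g hi

theorem juntaOf_injective (hs : s ∈ S) : Injective (juntaOf S s) := by
  intro g g' h
  funext r
  set a : Fin n → Bool := extend Subtype.val r fun _ => false
  have has : a s = false := extend_apply' _ _ _ fun ⟨j, hj⟩ => ne_of_mem_erase j.2 hj
  have hres : (S.erase s).restrict a = r :=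
    funext fun j => Subtype.val_injective.extend_apply r (fun _ => false) j
  rw [← hres, ← juntaOf_of_apply_eq_false g hs has, ← juntaOf_of_apply_eq_false g' hs has, h]

theorem two_pow_two_pow_le_card_setOf_isRelevant_eq (hS : S.Nonempty) :
    2 ^ 2 ^ (#S - 1) ≤ Nat.card {f : (Fin n → Bool) → Bool // {i | IsRelevant f i} = S} := by
  obtain ⟨s, hs⟩ := hS
  calc 2 ^ 2 ^ (#S - 1) = Nat.card ((S.erase s → Bool) → Bool) := by
        rw [Nat.card_eq_fintype_card, Fintype.card_fun, Fintype.card_fun, Fintype.card_coe,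
          card_erase_of_mem hs, Fintype.card_bool]
    _ ≤ _ :=
      Nat.card_le_card_of_injective (fun g => ⟨juntaOf S s g, setOf_isRelevant_juntaOf hs g⟩)
        fun _ _ h => juntaOf_injective hs (congrArg Subtype.val h)

theorem sum_card_setOf_isRelevant_eq_le (d : ℕ) :
    ∑ S ∈ powersetCard d (univ : Finset (Fin n)),
        Nat.card {f : (Fin n → Bool) → Bool // {i | IsRelevant f i} = S} ≤
      Nat.card {f : (Fin n → Bool) → Bool // Set.ncard {i | IsRelevant f i} ≤ d} := by
  rw [← sum_coe_sort, ← Nat.card_sigma]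
  refine Nat.card_le_card_of_injective (fun p => ⟨p.2.1, ?_⟩) ?_
  · rw [p.2.2, Set.ncard_coe_finset, (mem_powersetCard.1 p.1.2).2]
  · intro ⟨⟨S, _⟩, f, hf⟩ ⟨⟨T, _⟩, f', hf'⟩ h
    obtain rfl : f = f' := congrArg Subtype.val h
    obtain rfl : S = T := coe_injective (hf.symm.trans hf')
    rfl

end

theorem stmt_8_general (n d : ℕ) (hd : 1 ≤ d) :
    n.choose d * 2 ^ (2 ^ (d - 1)) ≤
      Nat.card {f : (Fin n → Bool) → Bool // Set.ncard {i | IsRelevant f i} ≤ d} :=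
  calc n.choose d * 2 ^ 2 ^ (d - 1)
      = ∑ S ∈ powersetCard d (univ : Finset (Fin n)), 2 ^ 2 ^ (#S - 1) := by
        rw [sum_congr rfl fun S hS => by rw [(mem_powersetCard.1 hS).2], sum_const,
          card_powersetCard, card_univ, Fintype.card_fin, smul_eq_mul]
    _ ≤ ∑ S ∈ powersetCard d (univ : Finset (Fin n)),
          Nat.card {f : (Fin n → Bool) → Bool // {i | IsRelevant f i} = S} :=
        sum_le_sum fun S hS => two_pow_two_pow_le_card_setOf_isRelevant_eq <|
          card_pos.1 ((mem_powersetCard.1 hS).2 ▸ hd)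
    _ ≤ _ := sum_card_setOf_isRelevant_eq_le d

/-- For all integers `1 ≤ d ≤ n`, the number of functions
`f : {0,1}ⁿ → {0,1}` with at most `d` relevant variables is at least `C(n,d)·2^{2^{d−1}}`. -/
theorem stmt_8 (n d : ℕ) (hd : 1 ≤ d) (hdn : d ≤ n) :
    n.choose d * 2 ^ (2 ^ (d - 1)) ≤
      Nat.card {f : (Fin n → Bool) → Bool // Set.ncard {i | IsRelevant f i} ≤ d} :=
  stmt_8_general n d hd
end

section
/- Let d ≥ 1 and n ≥ 2d be integers. For a finite set A ⊆ {0,1}ⁿ define X(A) = ∑ (c(B(i,j,k,z,A)) − 1), where the sum is over all nonnegative integers d₁, d₂ with d₁ + d₂ = d, all tuples i ∈ [n]^{d₂}, j ∈ [n]^{d₁}, k ∈ [n]^{d₂} whose d₁ + 2d₂ entries are distinct, and all z ∈ {0,1}^{d₁}, and where c(B) denotes the number of connected components of the bipartite graph B. Then for every finite A ⊆ {0,1}ⁿ there exists an assignment a ∈ {0,1}ⁿ such that X(A ∪ {a}) ≤ X(A)·(1 − 1/2^{d+1}). -/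
/-- The bipartite graph `B(i,j,k,z,A)` from Damaschke's characterization: left vertices
are `{0,1}^{d₂}` (the `Sum.inl` side), right vertices are `{0,1}^{d₂}` (the `Sum.inr`
side), and `(a',L)` is joined to `(a'',R)` iff some `a ∈ A` has `a|_i = a'`,
`a|_k = a''` and `a|_j = z`. -/
def JuntaBGraph {n d₁ d₂ : ℕ} (i k : Fin d₂ → Fin n) (j : Fin d₁ → Fin n)
    (z : Fin d₁ → Bool) (A : Set (Fin n → Bool)) :
    SimpleGraph ((Fin d₂ → Bool) ⊕ (Fin d₂ → Bool)) where
  Adj u v :=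
    match u, v with
    | Sum.inl a', Sum.inr a'' =>
        ∃ a ∈ A, (∀ t, a (i t) = a' t) ∧ (∀ t, a (k t) = a'' t) ∧ (∀ t, a (j t) = z t)
    | Sum.inr a'', Sum.inl a' =>
        ∃ a ∈ A, (∀ t, a (i t) = a' t) ∧ (∀ t, a (k t) = a'' t) ∧ (∀ t, a (j t) = z t)
    | _, _ => False
  symm := by
    constructor
    rintro (a' | a') (a'' | a'') h
    · exact h.elim
    · exact h
    · exact h
    · exact h.elim
  loopless := by
    constructor
    rintro (a' | a') h
    · exact h
    · exact h

open Classical in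
/-- `X(A) = ∑ (c(B(i,j,k,z,A)) − 1)`, the sum over all `d₁ + d₂ = d`, all tuples
`i, k ∈ [n]^{d₂}`, `j ∈ [n]^{d₁}` whose `d₁ + 2d₂` entries are distinct, and all
`z ∈ {0,1}^{d₁}`, of the number of connected components of `B(i,j,k,z,A)` minus one. -/
noncomputable def XA (n d : ℕ) (A : Set (Fin n → Bool)) : ℕ :=
  ∑ p ∈ Finset.HasAntidiagonal.antidiagonal d,
    ∑ i : Fin p.2 → Fin n, ∑ k : Fin p.2 → Fin n, ∑ j : Fin p.1 → Fin n,
      ∑ z : Fin p.1 → Bool,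
        if Function.Injective (Sum.elim (Sum.elim i k) j) then
          Nat.card (JuntaBGraph i k j z A).ConnectedComponent - 1
        else 0

/-!
Adding an assignment `a` to `A` merges two components of `B(i,j,k,z,A)` as soon as `a_j = z`
and `(a_i, L)`, `(a_k, R)` lie in different components. The entries of `i, j, k` being distinct,
`(a_i, a_k, a_j)` is uniformly distributed when `a` is, so this happens with probability
`2^{-d₁} s / 4^{d₂}`, where `s` counts the pairs of a left and a right vertex in different
components. A bipartite graph with `c` components and `m` vertices on each side has
`2 s ≥ (c - 1) m`, so every summand `c - 1` of `X` decreases in expectation by at least a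
`2^{-(d+1)}` fraction of itself, and some `a` does at least as well as the average.
-/

open Finset Function SimpleGraph

/-- Over `ℤ`, the right-hand side exceeds the left by `l' (2 r - 1) + r' (2 l - 1)`. -/
theorem Nat.two_mul_le_of_add_eq {l l' r r' m : ℕ} (hl : l + l' = m) (hr : r + r' = m)
    (hlr : 1 ≤ l + r) : 2 * m ≤ 2 * (l * r' + r * l') + l + r := by
  subst hl
  rcases Nat.eq_zero_or_pos l with rfl | hl0 <;> rcases Nat.eq_zero_or_pos r with rfl | hr0
  · omega
  all_goals nlinarith

theorem Finset.card_filter_ne_eq_sum {W K : Type*} [Fintype W] [Fintype K] [DecidableEq K]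
    (f g : W → K) : #{p : W × W | f p.1 ≠ g p.2} = ∑ u, #{x | f x = u} * #{y | g y ≠ u} := by
  rw [card_eq_sum_card_fiberwise (f := fun p : W × W => f p.1) (t := univ) fun _ _ => mem_univ _]
  refine sum_congr rfl fun u _ => ?_
  rw [← card_product, ← filter_product, filter_filter]
  congr 1
  ext ⟨x, y⟩
  simp only [mem_filter, mem_univ, true_and, univ_product_univ]
  constructor
  · rintro ⟨h, rfl⟩; exact ⟨rfl, h.symm⟩
  · rintro ⟨rfl, h⟩; exact ⟨h.symm, rfl⟩

theorem Finset.card_filter_ne_comm {W K : Type*} [Fintype W] [DecidableEq K] (f g : W → K) :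
    #{p : W × W | f p.1 ≠ g p.2} = #{p : W × W | g p.1 ≠ f p.2} :=
  card_equiv (Equiv.prodComm W W) fun p => by simp [ne_comm]

theorem Finset.sum_comm_le {ι κ M : Type*} [AddCommMonoid M] [Preorder M] [AddLeftMono M]
    {s : Finset ι} {t : Finset κ} {f : κ → ι → M} {g : ι → M}
    (h : ∀ x ∈ s, ∑ a ∈ t, f a x ≤ g x) : ∑ a ∈ t, ∑ x ∈ s, f a x ≤ ∑ x ∈ s, g x := by
  rw [sum_comm]
  exact sum_le_sum h

theorem Function.Surjective.card_mul_le_add_two_mul_card_ne {W K : Type*} [Fintype W]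
    [Fintype K] [DecidableEq K] {C : W ⊕ W → K} (hC : Surjective C) :
    Fintype.card K * Fintype.card W ≤
      Fintype.card W + 2 * #{p : W × W | C (.inl p.1) ≠ C (.inr p.2)} := by
  set m := Fintype.card W
  set S := #{p : W × W | C (.inl p.1) ≠ C (.inr p.2)}
  have hcard (f : W → K) (u) : #{x | f x = u} + #{x | f x ≠ u} = m :=
    card_filter_add_card_filter_not _
  have hfiber (f : W → K) : ∑ u, #{x | f x = u} = m :=
    (card_eq_sum_card_fiberwise fun _ _ => mem_univ _).symm
  have hnonempty (u : K) : 1 ≤ #{x | C (.inl x) = u} + #{y | C (.inr y) = u} := by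
    obtain ⟨v | v, rfl⟩ := hC u
    · have : 0 < #{x | C (.inl x) = C (.inl v)} := card_pos.mpr ⟨v, by simp⟩
      omega
    · have : 0 < #{y | C (.inr y) = C (.inr v)} := card_pos.mpr ⟨v, by simp⟩
      omega
  have hleft : S = ∑ u, #{x | C (.inl x) = u} * #{y | C (.inr y) ≠ u} :=
    card_filter_ne_eq_sum (C ∘ .inl) (C ∘ .inr)
  have hright : S = ∑ u, #{y | C (.inr y) = u} * #{x | C (.inl x) ≠ u} :=
    (card_filter_ne_comm (C ∘ .inl) (C ∘ .inr)).trans (card_filter_ne_eq_sum _ _)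
  have key : 2 * (Fintype.card K * m) ≤ 2 * (S + S) + 2 * m := by
    calc 2 * (Fintype.card K * m) = ∑ _u : K, 2 * m := by
          rw [sum_const, card_univ, smul_eq_mul]; ring
      _ ≤ ∑ u, (2 * (#{x | C (.inl x) = u} * #{y | C (.inr y) ≠ u} +
            #{y | C (.inr y) = u} * #{x | C (.inl x) ≠ u}) +
            #{x | C (.inl x) = u} + #{y | C (.inr y) = u}) :=
          sum_le_sum fun u _ => Nat.two_mul_le_of_add_eq (hcard _ u) (hcard _ u) (hnonempty u)
      _ = 2 * (S + S) + 2 * m := by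
          nth_rw 2 [hright]; rw [hleft]
          simp only [sum_add_distrib, ← mul_sum, hfiber]
          ring
  omega

theorem SimpleGraph.ConnectedComponent.card_lt_card_of_le_of_reachable {V : Type*} [Finite V]
    {G G' : SimpleGraph V} (h : G ≤ G') {x y : V} (hG : ¬ G.Reachable x y)
    (hG' : G'.Reachable x y) : Nat.card G'.ConnectedComponent < Nat.card G.ConnectedComponent := by
  have := Fintype.ofFinite G.ConnectedComponent
  have := Fintype.ofFinite G'.ConnectedComponent
  simp only [Nat.card_eq_fintype_card]
  refine Fintype.card_lt_of_surjective_not_injective _ (ConnectedComponent.surjective_map_ofLE h)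
    fun hinj => hG (ConnectedComponent.eq.mp (hinj ?_))
  simpa using ConnectedComponent.eq.mpr hG'

theorem SimpleGraph.card_connectedComponent_mul_le {W : Type*} [Finite W]
    (G : SimpleGraph (W ⊕ W)) :
    Nat.card G.ConnectedComponent * Nat.card W ≤
      Nat.card W + 2 * Nat.card {p : W × W // ¬ G.Reachable (.inl p.1) (.inr p.2)} := by
  classical
  have := Fintype.ofFinite W
  have := Fintype.ofFinite G.ConnectedComponent
  have hC : Surjective G.connectedComponentMk := Quot.mk_surjective
  simpa only [Nat.card_eq_fintype_card, Fintype.card_subtype, ne_eq, ConnectedComponent.eq]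
    using hC.card_mul_le_add_two_mul_card_ne

theorem Nat.card_subtype_comp_of_injective {α β T : Type*} [Finite α] [Finite β] {e : T → α}
    (he : Injective e) (P : (T → β) → Prop) :
    Nat.card {a : α → β // P (a ∘ e)} =
      Nat.card {g : T → β // P g} * Nat.card β ^ (Nat.card α - Nat.card T) := by
  classical
  let F : T ⊕ ↥(Set.range e)ᶜ ≃ α :=
    (Equiv.sumCongr (Equiv.ofInjective e he) (Equiv.refl _)).trans (Equiv.Set.sumCompl _)
  let E : (α → β) ≃ (T → β) × (↥(Set.range e)ᶜ → β) :=
    (F.symm.arrowCongr (Equiv.refl β)).trans (Equiv.sumArrowEquivProdArrow _ _ _)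
  have hcompl : Nat.card ↥(Set.range e)ᶜ = Nat.card α - Nat.card T := by
    rw [Nat.card_coe_set_eq, Set.ncard_compl, Set.ncard_range_of_injective he]
  calc Nat.card {a : α → β // P (a ∘ e)} = Nat.card ({g : T → β // P g} × (↥(Set.range e)ᶜ → β)) :=
        Nat.card_congr ((E.subtypeEquiv fun _ => Iff.rfl).trans
          Equiv.prodSubtypeFstEquivSubtypeProd)
    _ = _ := by rw [Nat.card_prod, Nat.card_fun, hcompl]

section Restriction

variable {n d₁ d₂ : ℕ} {i k : Fin d₂ → Fin n} {j : Fin d₁ → Fin n}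

theorem card_restrict_eq_card_mul_pow (he : Injective (Sum.elim (Sum.elim i k) j))
    (z : Fin d₁ → Bool) (R : (Fin d₂ → Bool) → (Fin d₂ → Bool) → Prop) :
    Nat.card {a : Fin n → Bool // a ∘ j = z ∧ R (a ∘ i) (a ∘ k)} =
      Nat.card {p : (Fin d₂ → Bool) × (Fin d₂ → Bool) // R p.1 p.2} *
        2 ^ (n - (d₂ + d₂ + d₁)) := by
  let E : ((Fin d₂ ⊕ Fin d₂) ⊕ Fin d₁ → Bool) ≃
      ((Fin d₂ → Bool) × (Fin d₂ → Bool)) × (Fin d₁ → Bool) :=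
    (Equiv.sumArrowEquivProdArrow _ _ _).trans
      ((Equiv.sumArrowEquivProdArrow _ _ _).prodCongr (Equiv.refl _))
  calc Nat.card {a : Fin n → Bool // a ∘ j = z ∧ R (a ∘ i) (a ∘ k)}
      = Nat.card {g : (Fin d₂ ⊕ Fin d₂) ⊕ Fin d₁ → Bool //
            g ∘ .inr = z ∧ R (g ∘ .inl ∘ .inl) (g ∘ .inl ∘ .inr)} * 2 ^ (n - (d₂ + d₂ + d₁)) := by
        refine (Nat.card_subtype_comp_of_injective he
          (fun g => g ∘ .inr = z ∧ R (g ∘ .inl ∘ .inl) (g ∘ .inl ∘ .inr))).trans ?_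
        simp only [Nat.card_eq_fintype_card, Fintype.card_bool, Fintype.card_sum, Fintype.card_fin]
    _ = Nat.card ({p : (Fin d₂ → Bool) × (Fin d₂ → Bool) // R p.1 p.2} × {w // w = z}) *
          2 ^ (n - (d₂ + d₂ + d₁)) := by
        congr 1
        exact Nat.card_congr ((E.subtypeEquiv fun g => and_comm).trans Equiv.subtypeProdEquivProd)
    _ = _ := by rw [Nat.card_prod, Nat.card_unique (α := {w // w = z}), mul_one]

theorem pow_mul_card_connectedComponent_sub_one_le (he : Injective (Sum.elim (Sum.elim i k) j))
    (z : Fin d₁ → Bool) (G : SimpleGraph ((Fin d₂ → Bool) ⊕ (Fin d₂ → Bool))) :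
    2 ^ n * (Nat.card G.ConnectedComponent - 1) ≤
      2 ^ (d₁ + d₂ + 1) * Nat.card {a : Fin n → Bool //
        a ∘ j = z ∧ ¬ G.Reachable (.inl (a ∘ i)) (.inr (a ∘ k))} := by
  have hn : d₂ + d₂ + d₁ ≤ n := by simpa using Fintype.card_le_of_injective _ he
  set S := Nat.card {p : (Fin d₂ → Bool) × (Fin d₂ → Bool) // ¬ G.Reachable (.inl p.1) (.inr p.2)}
  have hbip : Nat.card G.ConnectedComponent * 2 ^ d₂ ≤ 2 ^ d₂ + 2 * S := by
    simpa using G.card_connectedComponent_mul_le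
  have hS : (Nat.card G.ConnectedComponent - 1) * 2 ^ d₂ ≤ 2 * S := by
    rw [Nat.sub_one_mul]; omega
  rw [card_restrict_eq_card_mul_pow he z fun x y => ¬ G.Reachable (.inl x) (.inr y)]
  obtain ⟨q, rfl⟩ : ∃ q, n = q + (d₂ + d₂ + d₁) := ⟨n - (d₂ + d₂ + d₁), by omega⟩
  rw [Nat.add_sub_cancel]
  calc 2 ^ (q + (d₂ + d₂ + d₁)) * (Nat.card G.ConnectedComponent - 1)
      = 2 ^ q * 2 ^ (d₁ + d₂) * ((Nat.card G.ConnectedComponent - 1) * 2 ^ d₂) := by ring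
    _ ≤ 2 ^ q * 2 ^ (d₁ + d₂) * (2 * S) := by gcongr
    _ = 2 ^ (d₁ + d₂ + 1) * (S * 2 ^ q) := by ring

end Restriction

namespace JuntaBGraph

variable {n d₁ d₂ : ℕ} {i k : Fin d₂ → Fin n} {j : Fin d₁ → Fin n} {z : Fin d₁ → Bool}

theorem mono {A A' : Set (Fin n → Bool)} (h : A ⊆ A') :
    JuntaBGraph i k j z A ≤ JuntaBGraph i k j z A' := by
  rintro (x | x) (y | y) ⟨a, ha, hi, hk, hj⟩ <;> exact ⟨a, h ha, hi, hk, hj⟩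

theorem adj_of_mem {A : Set (Fin n → Bool)} {a : Fin n → Bool} (ha : a ∈ A) (hz : a ∘ j = z) :
    (JuntaBGraph i k j z A).Adj (.inl (a ∘ i)) (.inr (a ∘ k)) :=
  ⟨a, ha, fun _ => rfl, fun _ => rfl, congrFun hz⟩

theorem one_le_card_connectedComponent (A : Set (Fin n → Bool)) :
    1 ≤ Nat.card (JuntaBGraph i k j z A).ConnectedComponent :=
  Nat.card_pos

theorem card_connectedComponent_union_singleton_le (A : Set (Fin n → Bool)) (a : Fin n → Bool) :
    Nat.card (JuntaBGraph i k j z (A ∪ {a})).ConnectedComponent ≤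
      Nat.card (JuntaBGraph i k j z A).ConnectedComponent :=
  ConnectedComponent.card_le_card_of_le (mono Set.subset_union_left)

theorem card_connectedComponent_union_singleton_lt {A : Set (Fin n → Bool)} {a : Fin n → Bool}
    (hz : a ∘ j = z) (ha : ¬ (JuntaBGraph i k j z A).Reachable (.inl (a ∘ i)) (.inr (a ∘ k))) :
    Nat.card (JuntaBGraph i k j z (A ∪ {a})).ConnectedComponent <
      Nat.card (JuntaBGraph i k j z A).ConnectedComponent :=
  ConnectedComponent.card_lt_card_of_le_of_reachable (mono Set.subset_union_left) ha
    (adj_of_mem (Set.mem_union_right A (Set.mem_singleton a)) hz).reachable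

theorem sum_card_connectedComponent_union_singleton_add_le (A : Set (Fin n → Bool)) :
    ∑ a : Fin n → Bool, Nat.card (JuntaBGraph i k j z (A ∪ {a})).ConnectedComponent +
        Nat.card {a : Fin n → Bool //
          a ∘ j = z ∧ ¬ (JuntaBGraph i k j z A).Reachable (.inl (a ∘ i)) (.inr (a ∘ k))} ≤
      2 ^ n * Nat.card (JuntaBGraph i k j z A).ConnectedComponent := by
  classical
  rw [Nat.card_eq_fintype_card, Fintype.card_subtype, card_filter, ← sum_add_distrib]
  calc _ ≤ ∑ _a : Fin n → Bool, Nat.card (JuntaBGraph i k j z A).ConnectedComponent := by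
        refine sum_le_sum fun a _ => ?_
        split_ifs with h
        · exact card_connectedComponent_union_singleton_lt h.1 h.2
        · exact card_connectedComponent_union_singleton_le A a
    _ = _ := by simp

theorem sum_card_connectedComponent_union_singleton_sub_one_le
    (he : Injective (Sum.elim (Sum.elim i k) j)) (A : Set (Fin n → Bool)) :
    ∑ a : Fin n → Bool,
        ((Nat.card (JuntaBGraph i k j z (A ∪ {a})).ConnectedComponent - 1 : ℕ) : ℝ) ≤
      2 ^ n * ((Nat.card (JuntaBGraph i k j z A).ConnectedComponent - 1 : ℕ) : ℝ) *
        (1 - 1 / 2 ^ (d₁ + d₂ + 1)) := by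
  have hsum : (_ : ℝ) ≤ _ := Nat.cast_le.mpr
    (sum_card_connectedComponent_union_singleton_add_le (i := i) (k := k) (j := j) (z := z) A)
  have hcount : (_ : ℝ) ≤ _ :=
    Nat.cast_le.mpr (pow_mul_card_connectedComponent_sub_one_le he z (JuntaBGraph i k j z A))
  push_cast [Nat.cast_sub (one_le_card_connectedComponent _)] at hsum hcount ⊢
  have hN : 2 ^ n * ((Nat.card (JuntaBGraph i k j z A).ConnectedComponent : ℝ) - 1) /
      2 ^ (d₁ + d₂ + 1) ≤ Nat.card {a : Fin n → Bool //
        a ∘ j = z ∧ ¬ (JuntaBGraph i k j z A).Reachable (.inl (a ∘ i)) (.inr (a ∘ k))} := by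
    rw [div_le_iff₀ (by positivity)]; linarith
  rw [sum_sub_distrib, sum_const, card_univ, Fintype.card_fun, Fintype.card_bool,
    Fintype.card_fin, nsmul_one, mul_sub, mul_one, mul_one_div]
  push_cast
  linarith

end JuntaBGraph

theorem sum_XA_union_singleton_le (n d : ℕ) (A : Set (Fin n → Bool)) :
    ∑ a : Fin n → Bool, (XA n d (A ∪ {a}) : ℝ) ≤ 2 ^ n * XA n d A * (1 - 1 / 2 ^ (d + 1)) := by
  simp only [XA, Nat.cast_sum, Nat.cast_ite, Nat.cast_zero, mul_sum, sum_mul]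
  refine sum_comm_le fun p hp => sum_comm_le fun i _ => sum_comm_le fun k _ =>
    sum_comm_le fun j _ => sum_comm_le fun z _ => ?_
  split_ifs with he
  · rw [← HasAntidiagonal.mem_antidiagonal.mp hp]
    exact JuntaBGraph.sum_card_connectedComponent_union_singleton_sub_one_le he A
  · simp

theorem stmt_16_general (n d : ℕ) (A : Set (Fin n → Bool)) :
    ∃ a : Fin n → Bool,
      (XA n d (A ∪ {a}) : ℝ) ≤ (XA n d A : ℝ) * (1 - 1 / 2 ^ (d + 1)) := by
  have h : ∑ a : Fin n → Bool, (XA n d (A ∪ {a}) : ℝ) ≤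
      ∑ _a : Fin n → Bool, (XA n d A : ℝ) * (1 - 1 / 2 ^ (d + 1)) := by
    simpa [mul_assoc] using sum_XA_union_singleton_le n d A
  obtain ⟨a, -, ha⟩ := exists_le_of_sum_le univ_nonempty h
  exact ⟨a, ha⟩

/-- Let `d ≥ 1` and `n ≥ 2d`.  For every finite `A ⊆ {0,1}ⁿ` there is
an assignment `a ∈ {0,1}ⁿ` with `X(A ∪ {a}) ≤ X(A)·(1 − 1/2^{d+1})`. -/
theorem stmt_16 (n d : ℕ) (hd : 1 ≤ d) (hn : 2 * d ≤ n)
    (A : Set (Fin n → Bool)) (hA : A.Finite) :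
    ∃ a : Fin n → Bool,
      (XA n d (A ∪ {a}) : ℝ) ≤ (XA n d A : ℝ) * (1 - 1 / 2 ^ (d + 1)) :=
  stmt_16_general n d A
end

section
/- Let d ≥ 1 be an integer and n > 2d. Let F be the class of functions {0,1}ⁿ → {0,1} of the form f_{ξ,i}(x) = x₁^{ξ₁} ∧ ⋯ ∧ x_{d−1}^{ξ_{d−1}} ∧ x_i, where ξ = (ξ₁,…,ξ_{d−1}) ∈ {0,1}^{d−1} and d ≤ i ≤ n (so |F| = 2^{d−1}(n−d+1)). Let A ⊆ {0,1}ⁿ be a finite set of assignments and let g be any function mapping each restriction (A → {0,1}) to a function {0,1}ⁿ → {0,1}. If g(f restricted to A) = f holds for at least half of the functions f ∈ F, then |A| ≥ 2^{d−1}·(log₂(n−d+1) − 3)/4. -/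
/-!
Group the terms `f_{ξ,i}` by their prefix `ξ`. A term with prefix `ξ` vanishes at every point
whose prefix is not `ξ`, so its restriction to `A` is determined by its values on the `a_ξ`
points of `A` with prefix `ξ`; since `g` decodes each restriction to a single function, at most
`min(m, 2^{a_ξ})` of the `m = n - d + 1` terms with prefix `ξ` are recovered. With
`L = log₂ m`, each prefix satisfies `(L - 2) s_ξ ≤ (L - 2) m / 4 + a_ξ m`, and summing over the
`2^{d-1}` prefixes against `Σ s_ξ ≥ 2^{d-1} m / 2` gives `|A| = Σ a_ξ ≥ 2^{d-1} (L - 2) / 4`.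
-/

open Finset Real

theorem card_filter_decode_eq_self_le {X : Type*} [DecidableEq (X → Bool)]
    (A : Finset X) (g : (A → Bool) → X → Bool) (p : X → Prop) [DecidablePred p]
    (G : Finset (X → Bool)) (hG : ∀ f ∈ G, ∀ x, f x = true → p x) :
    #(G.filter fun f => g (fun a => f a) = f) ≤ 2 ^ #(A.filter p) := by
  have hinj : Set.InjOn (fun (f : X → Bool) (a : A.filter p) => f a)
      ↑(G.filter fun f => g (fun a => f a) = f) := by
    intro f hf f' hf' hff'
    simp only [coe_filter, Set.mem_ofPred_eq] at hf hf'
    have hA : (fun a : A => f a) = fun a : A => f' a := by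
      funext a
      by_cases ha : p a
      · exact congrFun hff' ⟨a, mem_filter.2 ⟨a.2, ha⟩⟩
      · rw [Bool.eq_false_iff.2 (mt (hG f hf.1 a) ha), Bool.eq_false_iff.2 (mt (hG f' hf'.1 a) ha)]
    rw [← hf.2, ← hf'.2, hA]
  classical
  calc _ ≤ #(univ : Finset (A.filter p → Bool)) :=
        card_le_card_of_injOn _ (fun _ _ => mem_coe.2 (mem_univ _)) hinj
    _ = 2 ^ #(A.filter p) := by simp

theorem logb_sub_two_mul_le {m s : ℝ} {a : ℕ} (hm : 0 < m) (hL : 2 ≤ logb 2 m)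
    (hsm : s ≤ m) (hsa : s ≤ 2 ^ a) :
    (logb 2 m - 2) * s ≤ (logb 2 m - 2) * m / 4 + a * m := by
  -- either `2 ^ a ≤ m / 4`, or `logb 2 m - 2 < a` and `s ≤ m` suffices
  by_cases ha : a + 2 ≤ logb 2 m
  · have h4 : 2 ^ a * 4 ≤ m := by
      rw [le_logb_iff_rpow_le (by norm_num) hm, rpow_add (by norm_num)] at ha
      norm_num at ha
      exact ha
    nlinarith [mul_nonneg hm.le (Nat.cast_nonneg (α := ℝ) a)]
  · nlinarith

theorem mul_logb_sub_two_le_sum {ι : Type*} (t : Finset ι) {m : ℕ} (s a : ι → ℕ)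
    (hsm : ∀ i ∈ t, s i ≤ m) (hsa : ∀ i ∈ t, s i ≤ 2 ^ a i)
    (hhalf : #t * m ≤ 2 * ∑ i ∈ t, s i) :
    #t * (logb 2 m - 2) / 4 ≤ ∑ i ∈ t, a i := by
  rcases le_or_gt (logb 2 m) 2 with hL | hL
  · have : (#t : ℝ) * (logb 2 m - 2) / 4 ≤ 0 := by
      nlinarith [(Nat.cast_nonneg (α := ℝ) #t)]
    exact this.trans (Nat.cast_nonneg _)
  have hm : (0 : ℝ) < m := by
    rcases Nat.eq_zero_or_pos m with h | h
    · simp [h] at hL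
      linarith
    · exact_mod_cast h
  have hterm : (logb 2 m - 2) * ∑ i ∈ t, (s i : ℝ) ≤
      #t * ((logb 2 m - 2) * m / 4) + (∑ i ∈ t, (a i : ℝ)) * m := by
    rw [mul_sum, sum_mul, ← nsmul_eq_mul, ← sum_const, ← sum_add_distrib]
    exact sum_le_sum fun i hi => logb_sub_two_mul_le hm hL.le
      (by exact_mod_cast hsm i hi) (by exact_mod_cast hsa i hi)
  have hhalf' : (#t : ℝ) * m ≤ 2 * ∑ i ∈ t, (s i : ℝ) := by exact_mod_cast hhalf
  have : #t * (logb 2 m - 2) / 4 * m ≤ (∑ i ∈ t, (a i : ℝ)) * m := by nlinarith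
  exact_mod_cast le_of_mul_le_mul_right this hm

section PrefixTerm

variable {n k : ℕ} (h : k ≤ n)

def prefixTerm (ξ : Fin k → Bool) (i : Fin n) (a : Fin n → Bool) : Bool :=
  decide (∀ t : Fin k, a (Fin.castLE h t) = ξ t) && a i

def extendPoint (ξ : Fin k → Bool) (i : Fin n) (l : Fin n) : Bool :=
  if hl : l.val < k then ξ ⟨l, hl⟩ else decide (l = i)

def highIndices (k n : ℕ) : Finset (Fin n) := univ.filter fun i => k ≤ i.val

def prefixTerms : Finset ((Fin n → Bool) → Bool) :=
  (univ ×ˢ highIndices k n).image fun p => prefixTerm h p.1 p.2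

variable {h}

theorem prefixTerm_eq_true {ξ : Fin k → Bool} {i : Fin n} {a : Fin n → Bool} :
    prefixTerm h ξ i a = true ↔ Fin.take k h a = ξ ∧ a i = true := by
  simp [prefixTerm, funext_iff, Fin.take_apply]

theorem take_extendPoint (ξ : Fin k → Bool) (i : Fin n) :
    Fin.take k h (extendPoint ξ i) = ξ := by
  funext t
  simp [Fin.take_apply, extendPoint]

theorem extendPoint_apply_of_le {ξ : Fin k → Bool} {i l : Fin n} (hl : k ≤ l.val) :
    extendPoint ξ i l = decide (l = i) := by
  simp [extendPoint, not_lt.2 hl]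

theorem prefixTerm_inj {ξ ζ : Fin k → Bool} {i j : Fin n} (hi : k ≤ i.val) (hj : k ≤ j.val)
    (heq : prefixTerm h ξ i = prefixTerm h ζ j) : ξ = ζ ∧ i = j := by
  have hself : prefixTerm h ξ i (extendPoint ξ i) = true :=
    prefixTerm_eq_true.2 ⟨take_extendPoint ξ i, by simp [extendPoint_apply_of_le hi]⟩
  obtain ⟨hζ, hj'⟩ := prefixTerm_eq_true.1 (heq ▸ hself)
  rw [extendPoint_apply_of_le hj, decide_eq_true_iff] at hj'
  exact ⟨(take_extendPoint ξ i).symm.trans hζ, hj'.symm⟩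

theorem card_highIndices (k n : ℕ) : #(highIndices k n) = n - k := by
  have hlt := Fin.card_filter_val_lt (n := n) (m := k)
  have hsplit := card_filter_add_card_filter_not (s := (univ : Finset (Fin n)))
    fun i : Fin n => (i : ℕ) < k
  simp only [not_lt, card_univ, Fintype.card_fin] at hsplit
  rw [highIndices]
  omega

variable (h)

theorem card_prefixTerms : #(prefixTerms h) = 2 ^ k * (n - k) := by
  rw [prefixTerms, card_image_of_injOn, card_product, card_highIndices]
  · simp
  rintro ⟨ξ, i⟩ hp ⟨ζ, j⟩ hq heq
  simp only [coe_product, coe_univ, Set.mem_prod, Set.mem_univ, true_and, highIndices,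
    coe_filter, Set.mem_ofPred_eq] at hp hq
  exact Prod.ext_iff.2 (prefixTerm_inj hp.2 hq.2 heq)

theorem prefixTerms_eq_biUnion :
    prefixTerms h = univ.biUnion fun ξ => (highIndices k n).image (prefixTerm h ξ) := by
  rw [prefixTerms, product_eq_biUnion, biUnion_image]
  simp only [image_image]
  rfl

end PrefixTerm

theorem mul_logb_sub_two_le_card {n k : ℕ} (h : k ≤ n) (A : Finset (Fin n → Bool))
    (g : (A → Bool) → (Fin n → Bool) → Bool)
    (hg : #(prefixTerms h) ≤ 2 * #((prefixTerms h).filter fun f => g (fun a => f a) = f)) :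
    2 ^ k * (logb 2 (n - k : ℕ) - 2) / 4 ≤ (#A : ℝ) := by
  set s : (Fin k → Bool) → ℕ := fun ξ =>
    #(((highIndices k n).image (prefixTerm h ξ)).filter fun f => g (fun a => f a) = f)
  have hsm : ∀ ξ ∈ univ, s ξ ≤ n - k := fun ξ _ =>
    (card_filter_le _ _).trans (card_image_le.trans (card_highIndices k n).le)
  have hsa : ∀ ξ ∈ univ, s ξ ≤ 2 ^ #(A.filter fun a => Fin.take k h a = ξ) := by
    intro ξ _
    refine card_filter_decode_eq_self_le A g _ _ fun f hf a ha => ?_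
    obtain ⟨i, -, rfl⟩ := mem_image.1 hf
    exact (prefixTerm_eq_true.1 ha).1
  have hhalf : #(univ : Finset (Fin k → Bool)) * (n - k) ≤ 2 * ∑ ξ, s ξ := by
    calc _ = #(prefixTerms h) := by rw [card_prefixTerms]; simp
      _ ≤ _ := hg
      _ ≤ _ := by
        rw [prefixTerms_eq_biUnion, filter_biUnion]
        exact Nat.mul_le_mul_left 2 card_biUnion_le
  have hA : #A = ∑ ξ, #(A.filter fun a => Fin.take k h a = ξ) :=
    card_eq_sum_card_fiberwise fun _ _ => mem_coe.2 (mem_univ _)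
  have := mul_logb_sub_two_le_sum univ s _ hsm hsa hhalf
  rw [hA]
  simpa using this

/-- Let `d ≥ 1`, `n > 2d`, and let `F` be the class of functions
`f_{ξ,i}(x) = x₁^{ξ₁} ∧ ⋯ ∧ x_{d−1}^{ξ_{d−1}} ∧ x_i` for `ξ ∈ {0,1}^{d−1}` and
`d ≤ i ≤ n` (coordinates are 0-indexed below, so `x₁,…,x_{d−1}` are coordinates
`0,…,d−2` and `i` ranges over the indices with `i ≥ d−1`).  Let `A ⊆ {0,1}ⁿ` be a set
of queries and `g` any map taking restrictions `A → {0,1}` to functions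
`{0,1}ⁿ → {0,1}`.  If `g(f|_A) = f` for at least half of `f ∈ F`, then
`|A| ≥ 2^{d−1}·(log₂(n−d+1) − 3)/4`. -/
theorem stmt_17 (n d : ℕ) (hn : 2 * d < n)
    (F : Finset ((Fin n → Bool) → Bool))
    (hF : F = Finset.image
      (fun p : (Fin (d - 1) → Bool) × Fin n =>
        fun a : Fin n → Bool =>
          (decide (∀ t : Fin (d - 1), a (Fin.castLE (by omega) t) = p.1 t)) && a p.2)
      ((Finset.univ : Finset (Fin (d - 1) → Bool)) ×ˢ
        (Finset.univ.filter fun i : Fin n => d - 1 ≤ i.val)))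
    (A : Finset (Fin n → Bool))
    (g : (↥A → Bool) → ((Fin n → Bool) → Bool))
    (hg : F.card ≤ 2 * (F.filter fun f => g (fun a => f ↑a) = f).card) :
    (2 : ℝ) ^ (d - 1) * (Real.logb 2 ((n : ℝ) - d + 1) - 3) / 4 ≤ (A.card : ℝ) := by
  subst hF
  refine le_trans ?_ (mul_logb_sub_two_le_card (k := d - 1) (by omega) A g hg)
  have hpos : (0 : ℝ) < n - d + 1 := by
    have : (2 * d : ℝ) < n := by exact_mod_cast hn
    linarith
  -- the truncated `n - (d - 1)` can fall short of `n - d + 1`, but only by half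
  have hle : (n : ℝ) - d + 1 ≤ 2 * ((n - (d - 1) : ℕ) : ℝ) := by
    have : n + 1 ≤ 2 * (n - (d - 1)) + d := by omega
    have : (n : ℝ) + 1 ≤ 2 * ((n - (d - 1) : ℕ) : ℝ) + d := by exact_mod_cast this
    linarith
  have hlog : logb 2 ((n : ℝ) - d + 1) ≤ 1 + logb 2 ((n - (d - 1) : ℕ) : ℝ) := by
    calc _ ≤ logb 2 (2 * ((n - (d - 1) : ℕ) : ℝ)) := logb_le_logb_of_le one_lt_two hpos hle
      _ = _ := by
        rw [logb_mul two_ne_zero (Nat.cast_ne_zero.2 (by omega)), logb_self_eq_one one_lt_two]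
  gcongr 2 ^ _ * ?_ / 4
  linarith
end
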